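/- arXiv:1104.1358 — 3 statements merged into one kernel-verified Lean document; each statement's English description precedes it below -/
import Mathlib

section
/- For all complex numbers a, b and complex s with Re(s) > max(1, 1+Re(a), 1+Re(b), 1+Re(a)+Re(b)), the Dirichlet series ∑_{n=1}^∞ σ_a(n) σ_b(n) n^{-s} equals ζ(s) ζ(s-a) ζ(s-b) ζ(s-a-b) / ζ(2s-a-b), where σ_a(n) = ∑_{d | n} d^a. -/
open Complex

/-- `σ_a(n) = ∑_{d ∣ n} d^a` for complex `a`. -/
noncomputable def csigma (a : ℂ) (n : ℕ) : ℂ := ∑ d ∈ n.divisors, (d : ℂ) ^ a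

namespace RWaux

open Finset ArithmeticFunction LSeries

/-- `n ↦ n ^ c` as an arithmetic function. -/
noncomputable def Pc (c : ℂ) : ArithmeticFunction ℂ :=
  ⟨fun n => if n = 0 then 0 else (n : ℂ) ^ c, rfl⟩

@[simp] lemma Pc_apply {c : ℂ} {n : ℕ} (hn : n ≠ 0) : Pc c n = (n : ℂ) ^ c := if_neg hn

/-- The function supported on squares, `m^2 ↦ m ^ c`. -/
noncomputable def SQ (c : ℂ) : ArithmeticFunction ℂ :=
  ⟨fun n => if n.sqrt ^ 2 = n ∧ n ≠ 0 then (n.sqrt : ℂ) ^ c else 0, by simp⟩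

lemma SQ_apply (c : ℂ) (n : ℕ) :
    SQ c n = if n.sqrt ^ 2 = n ∧ n ≠ 0 then (n.sqrt : ℂ) ^ c else 0 := rfl

lemma natCast_pow_cpow (p j : ℕ) (c : ℂ) :
    ((p ^ j : ℕ) : ℂ) ^ c = ((p : ℂ) ^ c) ^ j := by
  induction j with
  | zero => simp
  | succ j ih => rw [pow_succ, Nat.cast_mul, natCast_mul_natCast_cpow, ih, pow_succ]

lemma Pc_mult (c : ℂ) : (Pc c).IsMultiplicative := by
  constructor
  · simp [Pc]
  · intro m n hmn
    rcases eq_or_ne m 0 with rfl | hm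
    · simp [Pc]
    rcases eq_or_ne n 0 with rfl | hn
    · simp [Pc]
    rw [Pc_apply (Nat.mul_ne_zero hm hn), Pc_apply hm, Pc_apply hn, Nat.cast_mul,
      natCast_mul_natCast_cpow]

lemma sq_of_coprime_mul_sq {m n r : ℕ} (hmn : m.Coprime n) (h : m * n = r ^ 2) :
    m.sqrt ^ 2 = m := by
  obtain ⟨d, hd⟩ := exists_eq_pow_of_mul_eq_pow (α := ℕ)
    (Nat.isUnit_iff.mpr (Nat.coprime_iff_gcd_eq_one.mp hmn)) h
  rw [hd, Nat.sqrt_eq']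

lemma SQ_mult (c : ℂ) : (SQ c).IsMultiplicative := by
  constructor
  · simp [SQ]
  · intro m n hmn
    rcases eq_or_ne m 0 with rfl | hm
    · simp [SQ]
    rcases eq_or_ne n 0 with rfl | hn
    · simp [SQ]
    show (if _ then _ else _) = (if _ then _ else _) * (if _ then _ else _)
    by_cases hsq : (m * n).sqrt ^ 2 = m * n
    · have h1 : m.sqrt ^ 2 = m := sq_of_coprime_mul_sq hmn hsq.symm
      have h2 : n.sqrt ^ 2 = n := sq_of_coprime_mul_sq hmn.symm (by rw [mul_comm]; exact hsq.symm)
      have hsqrt : (m * n).sqrt = m.sqrt * n.sqrt := by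
        conv_lhs => rw [← h1, ← h2, ← mul_pow, Nat.sqrt_eq']
      rw [if_pos ⟨hsq, Nat.mul_ne_zero hm hn⟩, if_pos ⟨h1, hm⟩, if_pos ⟨h2, hn⟩, hsqrt,
        Nat.cast_mul, natCast_mul_natCast_cpow]
    · rw [if_neg (by tauto)]
      by_cases h1 : m.sqrt ^ 2 = m ∧ m ≠ 0
      · by_cases h2 : n.sqrt ^ 2 = n ∧ n ≠ 0
        · exfalso
          apply hsq
          have : m * n = (m.sqrt * n.sqrt) ^ 2 := by rw [mul_pow, h1.1, h2.1]
          rw [this, Nat.sqrt_eq']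
        · rw [if_neg h2, mul_zero]
      · rw [if_neg h1, zero_mul]

/-! ### The combinatorial key identity -/

lemma weight_eq (x y : ℂ) (j i l m q w : ℕ) (h1 : j + i = m + w) (h2 : j + l = m + q) :
    (x * y) ^ j * x ^ i * y ^ l = (x * y) ^ m * y ^ q * x ^ w := by
  rw [mul_pow, mul_pow,
    show x ^ j * y ^ j * x ^ i * y ^ l = x ^ (j + i) * y ^ (j + l) by
      rw [pow_add, pow_add]; ring,
    show x ^ m * y ^ m * y ^ q * x ^ w = x ^ (m + w) * y ^ (m + q) by
      rw [pow_add, pow_add]; ring, h1, h2]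

lemma key_alg (x y : ℂ) (k : ℕ) :
    ∑ j ∈ range (k / 2 + 1), (x * y) ^ j *
        ((∑ i ∈ range (k - 2 * j + 1), x ^ i) * (∑ l ∈ range (k - 2 * j + 1), y ^ l)) =
      ∑ m ∈ range (k + 1), (x * y) ^ m *
        (∑ q ∈ range (k - m + 1), y ^ q * ∑ i ∈ range (k - m - q + 1), x ^ i) := by
  have hL : (∑ p ∈ ((range (k / 2 + 1)).sigma fun j => range (k - 2 * j + 1)).sigma
          (fun p => range (k - 2 * p.1 + 1)),
        (x * y) ^ p.1.1 * x ^ p.1.2 * y ^ p.2) =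
      ∑ j ∈ range (k / 2 + 1), (x * y) ^ j *
        ((∑ i ∈ range (k - 2 * j + 1), x ^ i) * (∑ l ∈ range (k - 2 * j + 1), y ^ l)) := by
    rw [Finset.sum_sigma, Finset.sum_sigma]
    refine Finset.sum_congr rfl fun j _ => ?_
    rw [Finset.sum_mul_sum, Finset.mul_sum]
    refine Finset.sum_congr rfl fun i _ => ?_
    rw [Finset.mul_sum]
    exact Finset.sum_congr rfl fun l _ => by ring
  have hR : (∑ p ∈ ((range (k + 1)).sigma fun m => range (k - m + 1)).sigma
          (fun p => range (k - p.1 - p.2 + 1)),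
        (x * y) ^ p.1.1 * y ^ p.1.2 * x ^ p.2) =
      ∑ m ∈ range (k + 1), (x * y) ^ m *
        (∑ q ∈ range (k - m + 1), y ^ q * ∑ i ∈ range (k - m - q + 1), x ^ i) := by
    rw [Finset.sum_sigma, Finset.sum_sigma]
    refine Finset.sum_congr rfl fun m _ => ?_
    rw [Finset.mul_sum]
    refine Finset.sum_congr rfl fun q _ => ?_
    rw [Finset.mul_sum, Finset.mul_sum]
    exact Finset.sum_congr rfl fun i _ => by ring
  rw [← hL, ← hR]
  refine Finset.sum_bij'
    (i := fun p _ => ⟨⟨p.1.1 + (p.1.2 + p.2 + 2 * p.1.1 - k),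
        p.2 + p.1.1 - (p.1.1 + (p.1.2 + p.2 + 2 * p.1.1 - k))⟩,
        p.1.2 + p.1.1 - (p.1.1 + (p.1.2 + p.2 + 2 * p.1.1 - k))⟩)
    (j := fun p _ => ⟨⟨min p.1.1 (k - p.1.1 - p.1.2 - p.2),
        p.2 + (p.1.1 - min p.1.1 (k - p.1.1 - p.1.2 - p.2))⟩,
        p.1.2 + (p.1.1 - min p.1.1 (k - p.1.1 - p.1.2 - p.2))⟩)
    ?_ ?_ ?_ ?_ ?_
  · rintro ⟨⟨j, i⟩, l⟩ hp
    simp only [Finset.mem_sigma, Finset.mem_range] at hp ⊢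
    omega
  · rintro ⟨⟨m, q⟩, i⟩ hp
    simp only [Finset.mem_sigma, Finset.mem_range] at hp ⊢
    omega
  · rintro ⟨⟨j, i⟩, l⟩ hp
    simp only [Finset.mem_sigma, Finset.mem_range] at hp
    simp only [Sigma.ext_iff, heq_eq_eq, and_true, true_and]
    omega
  · rintro ⟨⟨m, q⟩, i⟩ hp
    simp only [Finset.mem_sigma, Finset.mem_range] at hp
    simp only [Sigma.ext_iff, heq_eq_eq, and_true, true_and]
    omega
  · rintro ⟨⟨j, i⟩, l⟩ hp
    simp only [Finset.mem_sigma, Finset.mem_range] at hp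
    dsimp only
    exact weight_eq x y j i l _ _ _ (by omega) (by omega)

/-! ### Prime-power evaluations -/

lemma mul_apply_pp (f g : ArithmeticFunction ℂ) {p : ℕ} (hp : p.Prime) (k : ℕ) :
    (f * g) (p ^ k) = ∑ j ∈ range (k + 1), f (p ^ j) * g (p ^ (k - j)) := by
  rw [ArithmeticFunction.mul_apply, Nat.sum_divisorsAntidiagonal (f := fun d e => f d * g e),
    Nat.sum_divisors_prime_pow hp]
  refine Finset.sum_congr rfl fun j hj => ?_
  rw [Nat.pow_div (by simpa using Nat.lt_succ_iff.mp (mem_range.mp hj)) hp.pos]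

lemma Pc_pp {p : ℕ} (hp : p ≠ 0) (c : ℂ) (j : ℕ) : Pc c (p ^ j) = ((p : ℂ) ^ c) ^ j := by
  rw [Pc_apply (pow_ne_zero _ hp), natCast_pow_cpow]

lemma sig_pp {p : ℕ} (hp : p.Prime) (c : ℂ) (r : ℕ) :
    (Pc 0 * Pc c) (p ^ r) = ∑ i ∈ range (r + 1), ((p : ℂ) ^ c) ^ i := by
  rw [mul_apply_pp _ _ hp]
  have h0 : ∀ j ∈ range (r + 1), Pc 0 (p ^ j) * Pc c (p ^ (r - j)) =
      ((p : ℂ) ^ c) ^ (r - j) := by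
    intro j _
    rw [Pc_pp hp.ne_zero, Pc_pp hp.ne_zero, cpow_zero, one_pow, one_mul]
  rw [Finset.sum_congr rfl h0]
  have := Finset.sum_range_reflect (fun i => ((p : ℂ) ^ c) ^ i) (r + 1)
  simpa using this

lemma SQ_pp {p : ℕ} (hp : p.Prime) (c : ℂ) (t : ℕ) :
    SQ c (p ^ t) = if Even t then ((p : ℂ) ^ c) ^ (t / 2) else 0 := by
  show (if _ then _ else _) = _
  by_cases ht : Even t
  · obtain ⟨u, hu⟩ := ht
    have h1 : p ^ t = (p ^ u) ^ 2 := by rw [← pow_mul]; congr 1; omega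
    have h2 : (p ^ t).sqrt = p ^ u := by rw [h1, Nat.sqrt_eq']
    rw [if_pos ⟨by rw [h2, ← h1], pow_ne_zero _ hp.ne_zero⟩, if_pos ⟨u, hu⟩, h2,
      natCast_pow_cpow]
    congr 1
    omega
  · rw [if_neg, if_neg ht]
    rintro ⟨hsq, -⟩
    apply ht
    have hdvd : (p ^ t).sqrt ∣ p ^ t := by
      conv_rhs => rw [← hsq]
      exact dvd_pow_self _ two_ne_zero
    obtain ⟨u, hu, heq⟩ := (Nat.dvd_prime_pow hp).mp hdvd
    rw [heq] at hsq
    have : p ^ (u * 2) = p ^ t := by rwa [pow_mul]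
    have := Nat.pow_right_injective hp.two_le this
    exact ⟨u, by omega⟩

lemma even_sum (G : ℕ → ℂ) (k : ℕ) :
    ∑ t ∈ range (k + 1), (if Even t then G t else 0) = ∑ j ∈ range (k / 2 + 1), G (2 * j) := by
  rw [← Finset.sum_filter]
  refine Finset.sum_bij' (i := fun t _ => t / 2) (j := fun j _ => 2 * j) ?_ ?_ ?_ ?_ ?_ <;>
    intro a ha <;>
    simp only [Finset.mem_filter, Finset.mem_range, Nat.even_iff] at ha ⊢
  · omega
  · omega
  · omega
  · omega
  · congr 1; omega

/-! ### The main convolution identity -/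

lemma main_id (c d : ℂ) :
    SQ (c + d) * ((Pc 0 * Pc c).pmul (Pc 0 * Pc d)) = Pc (c + d) * (Pc d * (Pc 0 * Pc c)) := by
  have hmL : (SQ (c + d) * ((Pc 0 * Pc c).pmul (Pc 0 * Pc d))).IsMultiplicative :=
    (SQ_mult _).mul (((Pc_mult 0).mul (Pc_mult c)).pmul ((Pc_mult 0).mul (Pc_mult d)))
  have hmR : (Pc (c + d) * (Pc d * (Pc 0 * Pc c))).IsMultiplicative :=
    (Pc_mult _).mul ((Pc_mult d).mul ((Pc_mult 0).mul (Pc_mult c)))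
  rw [ArithmeticFunction.IsMultiplicative.eq_iff_eq_on_prime_powers _ hmL _ hmR]
  intro p k hp
  have hpc : (p : ℂ) ≠ 0 := Nat.cast_ne_zero.mpr hp.ne_zero
  have hz : (p : ℂ) ^ (c + d) = (p : ℂ) ^ c * (p : ℂ) ^ d := cpow_add _ _ hpc
  rw [mul_apply_pp _ _ hp, mul_apply_pp _ _ hp]
  have e1 : ∑ t ∈ range (k + 1),
        SQ (c + d) (p ^ t) * ((Pc 0 * Pc c).pmul (Pc 0 * Pc d)) (p ^ (k - t)) =
      ∑ j ∈ range (k / 2 + 1), ((p : ℂ) ^ c * (p : ℂ) ^ d) ^ j *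
        ((∑ i ∈ range (k - 2 * j + 1), ((p : ℂ) ^ c) ^ i) *
          (∑ l ∈ range (k - 2 * j + 1), ((p : ℂ) ^ d) ^ l)) := by
    have h1 : ∀ t ∈ range (k + 1),
        SQ (c + d) (p ^ t) * ((Pc 0 * Pc c).pmul (Pc 0 * Pc d)) (p ^ (k - t)) =
        if Even t then ((p : ℂ) ^ c * (p : ℂ) ^ d) ^ (t / 2) *
          ((∑ i ∈ range (k - t + 1), ((p : ℂ) ^ c) ^ i) *
            (∑ l ∈ range (k - t + 1), ((p : ℂ) ^ d) ^ l)) else 0 := by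
      intro t _
      rw [SQ_pp hp, pmul_apply, sig_pp hp, sig_pp hp, hz]
      split_ifs with h
      · ring
      · exact zero_mul _
    rw [Finset.sum_congr rfl h1, even_sum]
    refine Finset.sum_congr rfl fun j _ => ?_
    rw [show 2 * j / 2 = j by omega]
  have e2 : ∑ m ∈ range (k + 1),
        Pc (c + d) (p ^ m) * (Pc d * (Pc 0 * Pc c)) (p ^ (k - m)) =
      ∑ m ∈ range (k + 1), ((p : ℂ) ^ c * (p : ℂ) ^ d) ^ m *
        (∑ q ∈ range (k - m + 1), ((p : ℂ) ^ d) ^ q *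
          ∑ i ∈ range (k - m - q + 1), ((p : ℂ) ^ c) ^ i) := by
    refine Finset.sum_congr rfl fun m _ => ?_
    rw [Pc_pp hp.ne_zero, hz, mul_apply_pp _ _ hp]
    congr 1
    refine Finset.sum_congr rfl fun q _ => ?_
    rw [Pc_pp hp.ne_zero, sig_pp hp]
  rw [e1, e2, key_alg]

/-! ### L-series of `Pc` -/

lemma term_Pc (c s : ℂ) (n : ℕ) : term (⇑(Pc c)) s n = term 1 (s - c) n := by
  rcases eq_or_ne n 0 with rfl | hn
  · simp
  · rw [term_of_ne_zero hn, term_of_ne_zero hn, Pc_apply hn, Pi.one_apply,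
      cpow_sub _ _ (Nat.cast_ne_zero.mpr hn)]
    rw [div_div_eq_mul_div, one_mul]

lemma LSeriesSummable_Pc {c s : ℂ} (hc : 1 < (s - c).re) : LSeriesSummable (⇑(Pc c)) s := by
  have h := LSeriesSummable_one_iff.mpr hc
  exact (summable_congr fun n => term_Pc c s n).mpr h

lemma LSeries_Pc {c s : ℂ} (hc : 1 < (s - c).re) : LSeries (⇑(Pc c)) s = riemannZeta (s - c) := by
  rw [← LSeries_one_eq_riemannZeta hc]
  exact tsum_congr fun n => term_Pc c s n

/-! ### L-series of `SQ` -/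

lemma term_SQ (c s : ℂ) (m : ℕ) : term (⇑(SQ c)) s (m ^ 2) = term 1 (2 * s - c) m := by
  rcases eq_or_ne m 0 with rfl | hm
  · simp
  · have hm2 : m ^ 2 ≠ 0 := pow_ne_zero _ hm
    rw [term_of_ne_zero hm2, term_of_ne_zero hm, SQ_apply, if_pos ⟨by rw [Nat.sqrt_eq'], hm2⟩,
      Nat.sqrt_eq', Pi.one_apply, natCast_pow_cpow,
      show ((m : ℂ) ^ s) ^ 2 = (m : ℂ) ^ (2 * s) by
        rw [← cpow_nat_mul]; norm_num,
      cpow_sub _ _ (Nat.cast_ne_zero.mpr hm)]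
    rw [div_div_eq_mul_div, one_mul]

lemma term_SQ_zero {c s : ℂ} {n : ℕ} (hn : n ∉ Set.range (fun m : ℕ => m ^ 2)) :
    term (⇑(SQ c)) s n = 0 := by
  rcases eq_or_ne n 0 with rfl | hn0
  · simp
  · rw [term_of_ne_zero hn0, SQ_apply, if_neg, zero_div]
    rintro ⟨h, -⟩
    exact hn ⟨n.sqrt, h⟩

lemma sq_injective : Function.Injective (fun m : ℕ => m ^ 2) :=
  fun _ _ h => Nat.pow_left_injective two_ne_zero h

lemma LSeriesSummable_SQ {c s : ℂ} (hc : 1 < (2 * s - c).re) :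
    LSeriesSummable (⇑(SQ c)) s := by
  have h := LSeriesSummable_one_iff.mpr hc
  have := (sq_injective.summable_iff (f := term (⇑(SQ c)) s)
    (fun n hn => term_SQ_zero hn)).mp
  exact this ((summable_congr fun m => term_SQ c s m).mpr h)

lemma LSeries_SQ {c s : ℂ} (hc : 1 < (2 * s - c).re) :
    LSeries (⇑(SQ c)) s = riemannZeta (2 * s - c) := by
  rw [← LSeries_one_eq_riemannZeta hc]
  have hsupp : Function.support (term (⇑(SQ c)) s) ⊆ Set.range (fun m : ℕ => m ^ 2) := by
    intro n hn
    by_contra h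
    exact hn (term_SQ_zero h)
  rw [LSeries, LSeries, ← sq_injective.tsum_eq hsupp]
  exact tsum_congr fun m => term_SQ c s m

/-! ### `csigma` as an arithmetic function -/

lemma csigma_eq (c : ℂ) : ⇑(Pc 0 * Pc c) = csigma c := by
  funext n
  rcases eq_or_ne n 0 with rfl | hn
  · simp [csigma]
  · rw [ArithmeticFunction.mul_apply,
      Nat.sum_divisorsAntidiagonal' (f := fun d e => Pc 0 d * Pc c e)]
    unfold csigma
    refine Finset.sum_congr rfl fun d hd => ?_
    obtain ⟨hdvd, -⟩ := Nat.mem_divisors.mp hd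
    have hd0 : d ≠ 0 := Nat.pos_of_mem_divisors hd |>.ne'
    have hnd : n / d ≠ 0 := by
      have := Nat.div_pos (Nat.le_of_dvd (Nat.pos_of_ne_zero hn) hdvd) (Nat.pos_of_ne_zero hd0)
      omega
    rw [Pc_apply hnd, Pc_apply hd0, cpow_zero, one_mul]

/-! ### Real-valued bounds -/

noncomputable def rs (t : ℝ) (n : ℕ) : ℝ := ∑ d ∈ n.divisors, (d : ℝ) ^ t

lemma rs_nonneg (t : ℝ) (n : ℕ) : 0 ≤ rs t n :=
  Finset.sum_nonneg fun d _ => Real.rpow_nonneg (Nat.cast_nonneg d) t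

lemma csigma_ofReal (t : ℝ) (n : ℕ) : csigma (t : ℂ) n = ((rs t n : ℝ) : ℂ) := by
  unfold csigma rs
  rw [ofReal_sum]
  refine Finset.sum_congr rfl fun d _ => ?_
  rw [ofReal_cpow (Nat.cast_nonneg d), ofReal_natCast]

lemma norm_csigma_le (c : ℂ) (n : ℕ) : ‖csigma c n‖ ≤ rs c.re n := by
  refine (norm_sum_le _ _).trans ?_
  unfold rs
  refine Finset.sum_le_sum fun d hd => ?_
  rw [norm_natCast_cpow_of_pos (Nat.pos_of_mem_divisors hd)]

noncomputable def rSQ (t : ℝ) (d : ℕ) : ℝ :=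
  if d.sqrt ^ 2 = d ∧ d ≠ 0 then (d.sqrt : ℝ) ^ t else 0

lemma rSQ_nonneg (t : ℝ) (d : ℕ) : 0 ≤ rSQ t d := by
  unfold rSQ
  split_ifs
  · exact Real.rpow_nonneg (Nat.cast_nonneg _) t
  · exact le_refl _

lemma SQ_ofReal (t : ℝ) (d : ℕ) : SQ (t : ℂ) d = ((rSQ t d : ℝ) : ℂ) := by
  rw [SQ_apply]
  unfold rSQ
  split_ifs
  · rw [ofReal_cpow (Nat.cast_nonneg _), ofReal_natCast]
  · simp

lemma rSQ_one (t : ℝ) : rSQ t 1 = 1 := by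
  unfold rSQ
  rw [if_pos ⟨by simp, one_ne_zero⟩]
  simp

/-- The key comparison: `|σ_a(n) σ_b(n)| ≤ |H n|` where `H` is the LHS of the main identity
for the real parts. -/
lemma F_le_H (a b : ℂ) (n : ℕ) :
    ‖csigma a n * csigma b n‖ ≤
      ‖(SQ ((a.re : ℂ) + (b.re : ℂ)) *
        ((Pc 0 * Pc (a.re : ℂ)).pmul (Pc 0 * Pc (b.re : ℂ)))) n‖ := by
  rcases eq_or_ne n 0 with rfl | hn
  · simp [csigma]
  have hsum : (SQ ((a.re : ℂ) + (b.re : ℂ)) *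
        ((Pc 0 * Pc (a.re : ℂ)).pmul (Pc 0 * Pc (b.re : ℂ)))) n =
      ((∑ p ∈ n.divisorsAntidiagonal,
        rSQ (a.re + b.re) p.1 * (rs a.re p.2 * rs b.re p.2) : ℝ) : ℂ) := by
    rw [ArithmeticFunction.mul_apply, ofReal_sum]
    refine Finset.sum_congr rfl fun p _ => ?_
    rw [pmul_apply, csigma_eq, csigma_eq, csigma_ofReal, csigma_ofReal,
      show ((a.re : ℂ) + (b.re : ℂ)) = ((a.re + b.re : ℝ) : ℂ) by push_cast; ring,
      SQ_ofReal]
    push_cast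
    ring
  rw [hsum]
  have hterm : rs a.re n * rs b.re n ≤
      ∑ p ∈ n.divisorsAntidiagonal, rSQ (a.re + b.re) p.1 * (rs a.re p.2 * rs b.re p.2) := by
    have hmem : ((1 : ℕ), n) ∈ n.divisorsAntidiagonal := by
      rw [Nat.mem_divisorsAntidiagonal]
      exact ⟨one_mul n, hn⟩
    have := Finset.single_le_sum
      (f := fun p : ℕ × ℕ => rSQ (a.re + b.re) p.1 * (rs a.re p.2 * rs b.re p.2))
      (fun p _ => mul_nonneg (rSQ_nonneg _ _)
        (mul_nonneg (rs_nonneg _ _) (rs_nonneg _ _))) hmem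
    simpa [rSQ_one] using this
  have h1 : ‖csigma a n * csigma b n‖ ≤ rs a.re n * rs b.re n := by
    rw [norm_mul]
    exact mul_le_mul (norm_csigma_le a n) (norm_csigma_le b n) (norm_nonneg _)
      (rs_nonneg _ _)
  refine h1.trans (hterm.trans ?_)
  rw [Complex.norm_real]
  exact le_abs_self _

end RWaux

open RWaux Finset ArithmeticFunction LSeries

/-- Ramanujan–Wilson identity. -/
theorem ramanujan_wilson (a b s : ℂ)
    (hs : max (max 1 (1 + a.re)) (max (1 + b.re) (1 + a.re + b.re)) < s.re) :
    ∑' n : ℕ, csigma a (n + 1) * csigma b (n + 1) * ((n : ℂ) + 1) ^ (-s) =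
      riemannZeta s * riemannZeta (s - a) * riemannZeta (s - b) *
        riemannZeta (s - a - b) / riemannZeta (2 * s - a - b) := by
  simp only [max_lt_iff] at hs
  obtain ⟨⟨h1, ha⟩, hb, hab⟩ := hs
  have hre : ∀ c : ℂ, (s - c).re = s.re - c.re := fun c => by simp [Complex.sub_re]
  have hs0 : 1 < (s - 0).re := by rw [hre]; simpa using h1
  have hsa : 1 < (s - a).re := by rw [hre]; linarith
  have hsb : 1 < (s - b).re := by rw [hre]; linarith
  have hsab : 1 < (s - (a + b)).re := by
    rw [hre, Complex.add_re]; linarith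
  have h2s : 1 < (2 * s - (a + b)).re := by
    have : (2 * s).re = 2 * s.re := by
      rw [show (2 : ℂ) * s = s + s by ring, Complex.add_re]; ring
    rw [Complex.sub_re, this, Complex.add_re]
    linarith
  have hsa' : 1 < (s - (a.re : ℂ)).re := by rw [hre, Complex.ofReal_re]; linarith
  have hsb' : 1 < (s - (b.re : ℂ)).re := by rw [hre, Complex.ofReal_re]; linarith
  have hsab' : 1 < (s - ((a.re : ℂ) + (b.re : ℂ))).re := by
    rw [hre, Complex.add_re, Complex.ofReal_re, Complex.ofReal_re]; linarith
  have hP0 := LSeriesSummable_Pc hs0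
  have hPa := LSeriesSummable_Pc hsa
  have hPb := LSeriesSummable_Pc hsb
  have hPab := LSeriesSummable_Pc hsab
  have hH : LSeriesSummable
      (⇑(SQ ((a.re : ℂ) + (b.re : ℂ)) *
        ((Pc 0 * Pc (a.re : ℂ)).pmul (Pc 0 * Pc (b.re : ℂ))))) s := by
    rw [main_id]
    exact LSeriesSummable_mul (LSeriesSummable_Pc hsab')
      (LSeriesSummable_mul (LSeriesSummable_Pc hsb')
        (LSeriesSummable_mul hP0 (LSeriesSummable_Pc hsa')))
  set P := (Pc 0 * Pc a).pmul (Pc 0 * Pc b) with hPdef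
  have hPapp : ⇑P = fun n => csigma a n * csigma b n := by
    funext n
    rw [hPdef, pmul_apply, csigma_eq, csigma_eq]
  have hFsum : LSeriesSummable (⇑P) s := by
    refine Summable.of_norm (Summable.of_nonneg_of_le (fun n => norm_nonneg _)
      (fun n => ?_) hH.norm)
    refine norm_term_le s ?_
    rw [hPapp]
    exact F_le_H a b n
  have hSQs : LSeriesSummable (⇑(SQ (a + b))) s := LSeriesSummable_SQ h2s
  have key : LSeries (⇑(SQ (a + b))) s * LSeries (⇑P) s =
      riemannZeta (s - (a + b)) * (riemannZeta (s - b) *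
        (riemannZeta (s - 0) * riemannZeta (s - a))) := by
    rw [← LSeries_mul' hSQs hFsum]
    have : SQ (a + b) * P = Pc (a + b) * (Pc b * (Pc 0 * Pc a)) := main_id a b
    rw [show (fun n => (SQ (a + b) * P) n) = ⇑(Pc (a + b) * (Pc b * (Pc 0 * Pc a))) by
      rw [this]]
    rw [LSeries_mul' hPab (LSeriesSummable_mul hPb (LSeriesSummable_mul hP0 hPa)),
      LSeries_mul' hPb (LSeriesSummable_mul hP0 hPa), LSeries_mul' hP0 hPa,
      LSeries_Pc hsab, LSeries_Pc hsb, LSeries_Pc hs0, LSeries_Pc hsa]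
  have hz2 : riemannZeta (2 * s - a - b) ≠ 0 := by
    refine riemannZeta_ne_zero_of_one_lt_re ?_
    rwa [sub_sub]
  have hLSQ : LSeries (⇑(SQ (a + b))) s = riemannZeta (2 * s - a - b) := by
    rw [LSeries_SQ h2s, sub_sub]
  have hLP : LSeries (⇑P) s =
      riemannZeta s * riemannZeta (s - a) * riemannZeta (s - b) *
        riemannZeta (s - a - b) / riemannZeta (2 * s - a - b) := by
    rw [eq_div_iff hz2, mul_comm (riemannZeta s)]
    rw [← hLSQ, mul_comm (LSeries (⇑P) s), key, sub_zero, sub_sub]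
    ring
  rw [← hLP, LSeries]
  rw [Summable.tsum_eq_zero_add hFsum]
  rw [term_zero, zero_add]
  refine tsum_congr fun n => ?_
  rw [term_of_ne_zero (Nat.succ_ne_zero n), hPapp]
  push_cast
  rw [cpow_neg, div_eq_mul_inv]
end

section
/- For every prime p, complex s with Re(s) > 1, and real T₁, T₂, the local Euler factor identity holds: ∑_{k=0}^∞ σ_{iT₁}(p^k) σ_{-iT₂}(p^k) p^{-ks} = (1 - p^{i(T₁-T₂)-2s}) / ((1-p^{-s})(1-p^{iT₁-s})(1-p^{-iT₂-s})(1-p^{i(T₁-T₂)-s})). -/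
open Complex

open Complex Finset

lemma sumNorm1 {r : ℝ} (h0 : 0 ≤ r) (h : r < 1) :
    Summable fun n : ℕ => ((n : ℝ) + 1) * r ^ n := by
  have h1 : Summable fun n : ℕ => (n : ℝ) ^ 1 * r ^ n :=
    summable_pow_mul_geometric_of_norm_lt_one 1 (by rwa [Real.norm_eq_abs, _root_.abs_of_nonneg h0])
  have h2 : Summable fun n : ℕ => r ^ n := summable_geometric_of_lt_one h0 h
  exact (h1.add h2).congr (fun n => by ring)

lemma sumNorm2 {r : ℝ} (h0 : 0 ≤ r) (h : r < 1) :
    Summable fun n : ℕ => (((n : ℝ) + 1) * ((n : ℝ) + 1)) * r ^ n := by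
  have h1 : Summable fun n : ℕ => (n : ℝ) ^ 2 * r ^ n :=
    summable_pow_mul_geometric_of_norm_lt_one 2 (by rwa [Real.norm_eq_abs, _root_.abs_of_nonneg h0])
  have h2 : Summable fun n : ℕ => (n : ℝ) ^ 1 * r ^ n :=
    summable_pow_mul_geometric_of_norm_lt_one 1 (by rwa [Real.norm_eq_abs, _root_.abs_of_nonneg h0])
  have h3 : Summable fun n : ℕ => r ^ n := summable_geometric_of_lt_one h0 h
  exact ((h1.add (h2.add h2)).add h3).congr (fun n => by ring)

lemma key_identity (α β x : ℂ) (hα : ‖α‖ = 1) (hβ : ‖β‖ = 1) (hx : ‖x‖ < 1) :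
    ∑' k : ℕ, (∑ i ∈ Finset.range (k+1), α ^ i) * (∑ j ∈ Finset.range (k+1), β ^ j) * x ^ k
      = (1 - α * β * (x * x)) / ((1 - x) * (1 - α * x) * (1 - β * x) * (1 - α * β * x)) := by
  have hα0 : α ≠ 0 := fun h => by simp [h] at hα
  have hβ0 : β ≠ 0 := fun h => by simp [h] at hβ
  have hαx : ‖α * x‖ < 1 := by rw [norm_mul, hα, one_mul]; exact hx
  have hβx : ‖β * x‖ < 1 := by rw [norm_mul, hβ, one_mul]; exact hx
  have hαβx : ‖α * β * x‖ < 1 := by rw [norm_mul, norm_mul, hα, hβ, one_mul, one_mul]; exact hx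
  have hne : ∀ z : ℂ, ‖z‖ < 1 → 1 - z ≠ 0 := by
    intro z hz h
    rw [sub_eq_zero] at h
    rw [← h] at hz; simp at hz
  -- norm bounds on partial geometric sums
  have hS : ∀ (γ : ℂ), ‖γ‖ = 1 → ∀ k : ℕ, ‖∑ i ∈ Finset.range (k+1), γ ^ i‖ ≤ (k : ℝ) + 1 := by
    intro γ hγ k
    calc ‖∑ i ∈ Finset.range (k+1), γ ^ i‖ ≤ ∑ i ∈ Finset.range (k+1), ‖γ ^ i‖ :=
          norm_sum_le _ _
      _ = (k : ℝ) + 1 := by simp [norm_pow, hγ]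
  set f : ℕ → ℂ := fun k =>
    (∑ i ∈ Finset.range (k+1), α ^ i) * (∑ j ∈ Finset.range (k+1), β ^ j) * x ^ k with hf_def
  set a : ℕ → ℂ := fun k => α ^ k * (∑ j ∈ Finset.range (k+1), β ^ j) * x ^ k with ha_def
  set b : ℕ → ℂ := fun k => β ^ k * (∑ i ∈ Finset.range (k+1), α ^ i) * x ^ k with hb_def
  have hx0 : 0 ≤ ‖x‖ := norm_nonneg x
  have hfs : Summable f := by
    apply Summable.of_norm_bounded (sumNorm2 hx0 hx)
    intro k
    simp only [hf_def, norm_mul, norm_pow]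
    have := mul_le_mul (hS α hα k) (hS β hβ k) (norm_nonneg _) (by positivity)
    exact mul_le_mul_of_nonneg_right this (by positivity)
  have has : Summable a := by
    apply Summable.of_norm_bounded (sumNorm1 hx0 hx)
    intro k
    simp only [ha_def, norm_mul, norm_pow, hα, one_pow, one_mul]
    exact mul_le_mul_of_nonneg_right (hS β hβ k) (by positivity)
  have hbs : Summable b := by
    apply Summable.of_norm_bounded (sumNorm1 hx0 hx)
    intro k
    simp only [hb_def, norm_mul, norm_pow, hβ, one_pow, one_mul]
    exact mul_le_mul_of_nonneg_right (hS α hα k) (by positivity)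
  -- Cauchy products
  have hgeomnorm : ∀ z : ℂ, ‖z‖ < 1 → Summable fun n : ℕ => ‖z ^ n‖ := by
    intro z hz
    exact (summable_geometric_of_lt_one (norm_nonneg z) hz).congr (fun n => (norm_pow z n).symm)
  have hcauchy : ∀ γ δ : ℂ, ‖γ‖ = 1 → ‖δ‖ = 1 → ‖γ * x‖ < 1 →
      ∑' k : ℕ, (γ ^ k * ∑ j ∈ Finset.range (k+1), δ ^ j) * x ^ k
        = (1 - γ * δ * x)⁻¹ * (1 - γ * x)⁻¹ := by
    intro γ δ hγ hδ hγx
    have hγβx : ‖γ * δ * x‖ < 1 := by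
      rw [norm_mul, norm_mul, hγ, hδ, one_mul, one_mul]; exact hx
    have hmul := tsum_mul_tsum_eq_tsum_sum_antidiagonal_of_summable_norm
      (f := fun n : ℕ => (γ * δ * x) ^ n) (g := fun n : ℕ => (γ * x) ^ n)
      (hgeomnorm _ hγβx) (hgeomnorm _ hγx)
    rw [tsum_geometric_of_norm_lt_one hγβx, tsum_geometric_of_norm_lt_one hγx] at hmul
    rw [hmul]
    apply tsum_congr
    intro k
    rw [Finset.Nat.sum_antidiagonal_eq_sum_range_succ_mk, Finset.mul_sum, Finset.sum_mul]
    apply Finset.sum_congr rfl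
    intro i hi
    have hik : i ≤ k := Nat.lt_succ_iff.mp (Finset.mem_range.mp hi)
    have h1 : γ ^ i * γ ^ (k - i) = γ ^ k := by rw [← pow_add, Nat.add_sub_cancel' hik]
    have h2 : x ^ i * x ^ (k - i) = x ^ k := by rw [← pow_add, Nat.add_sub_cancel' hik]
    rw [← h1, ← h2]; ring
  have hA : ∑' k, a k = (1 - α * β * x)⁻¹ * (1 - α * x)⁻¹ := hcauchy α β hα hβ hαx
  have hB : ∑' k, b k = (1 - α * β * x)⁻¹ * (1 - β * x)⁻¹ := by
    have := hcauchy β α hβ hα hβx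
    rw [show β * α * x = α * β * x from by ring] at this
    exact this
  have hrec : ∀ k : ℕ, f (k+1) = a (k+1) + (β * x) * b k + x * f k := by
    intro k
    simp only [hf_def, ha_def, hb_def, Finset.sum_range_succ]
    ring
  have hb' : Summable fun k => (β * x) * b k := hbs.mul_left _
  have hf' : Summable fun k => x * f k := hfs.mul_left _
  have h1 : ∑' k, f (k+1) =
      (∑' k, a (k+1)) + ((β * x) * ∑' k, b k + x * ∑' k, f k) := by
    calc ∑' k, f (k+1) = ∑' k, (a (k+1) + ((β * x) * b k + x * f k)) :=
          tsum_congr (fun k => by rw [hrec k]; ring)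
      _ = (∑' k, a (k+1)) + ∑' k, ((β * x) * b k + x * f k) :=
          Summable.tsum_add ((summable_nat_add_iff 1).mpr has) (hb'.add hf')
      _ = (∑' k, a (k+1)) + ((β * x) * ∑' k, b k + x * ∑' k, f k) := by
          rw [Summable.tsum_add hb' hf', tsum_mul_left, tsum_mul_left]
  have h2 : ∑' k, a (k+1) = (∑' k, a k) - a 0 := by
    rw [Summable.tsum_eq_zero_add has]; ring
  have h3 : ∑' k, f k = f 0 + ∑' k, f (k+1) := Summable.tsum_eq_zero_add hfs
  have hf0 : f 0 = 1 := by simp [hf_def]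
  have ha0 : a 0 = 1 := by simp [ha_def]
  have hmain : (∑' k, f k) * (1 - x) =
      (1 - α * β * x)⁻¹ * (1 - α * x)⁻¹ + (β * x) * ((1 - α * β * x)⁻¹ * (1 - β * x)⁻¹) := by
    rw [h1, h2, hf0, ha0, hA, hB] at h3
    linear_combination h3
  have d1 : (1 : ℂ) - x ≠ 0 := hne _ hx
  have d2 : (1 : ℂ) - α * x ≠ 0 := hne _ hαx
  have d3 : (1 : ℂ) - β * x ≠ 0 := hne _ hβx
  have d4 : (1 : ℂ) - α * β * x ≠ 0 := hne _ hαβx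
  rw [eq_div_iff (by exact mul_ne_zero (mul_ne_zero (mul_ne_zero d1 d2) d3) d4)]
  calc (∑' k, f k) * ((1 - x) * (1 - α * x) * (1 - β * x) * (1 - α * β * x))
      = ((1 - α * β * x)⁻¹ * (1 - α * x)⁻¹ + (β * x) * ((1 - α * β * x)⁻¹ * (1 - β * x)⁻¹)) *
          ((1 - α * x) * (1 - β * x) * (1 - α * β * x)) := by rw [← hmain]; ring
    _ = 1 - α * β * (x * x) := by field_simp; ring


/-- Euler-factor form of the Ramanujan–Wilson identity at a single prime. -/
theorem ramanujan_wilson_euler_factor (p : ℕ) (hp : p.Prime) (s : ℂ) (hs : 1 < s.re)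
    (T₁ T₂ : ℝ) :
    ∑' k : ℕ, csigma (I * T₁) (p ^ k) * csigma (-I * T₂) (p ^ k) * (p : ℂ) ^ (-(k : ℂ) * s) =
      (1 - (p : ℂ) ^ (I * (T₁ - T₂) - 2 * s)) /
        ((1 - (p : ℂ) ^ (-s)) * (1 - (p : ℂ) ^ (I * T₁ - s)) *
          (1 - (p : ℂ) ^ (-I * T₂ - s)) * (1 - (p : ℂ) ^ (I * (T₁ - T₂) - s))) := by
  have hp1 : (1 : ℝ) < p := by exact_mod_cast hp.one_lt
  have hp0R : (0 : ℝ) < p := lt_trans zero_lt_one hp1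
  have hp0 : (p : ℂ) ≠ 0 := Nat.cast_ne_zero.mpr hp.pos.ne'
  have hnorm : ∀ w : ℂ, ‖(p : ℂ) ^ w‖ = (p : ℝ) ^ w.re := by
    intro w
    rw [show (p : ℂ) = ((p : ℝ) : ℂ) by push_cast; ring,
      Complex.norm_cpow_eq_rpow_re_of_pos hp0R]
  set α := (p : ℂ) ^ (I * (T₁ : ℂ)) with hαdef
  set β := (p : ℂ) ^ (-I * (T₂ : ℂ)) with hβdef
  set x := (p : ℂ) ^ (-s) with hxdef
  have hα : ‖α‖ = 1 := by rw [hαdef, hnorm]; simp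
  have hβ : ‖β‖ = 1 := by rw [hβdef, hnorm]; simp
  have hx : ‖x‖ < 1 := by
    rw [hxdef, hnorm, Complex.neg_re]
    exact Real.rpow_lt_one_of_one_lt_of_neg hp1 (by linarith)
  have hsig : ∀ (w : ℂ) (k : ℕ),
      csigma w (p ^ k) = ∑ i ∈ Finset.range (k + 1), ((p : ℂ) ^ w) ^ i := by
    intro w k
    rw [csigma, Nat.sum_divisors_prime_pow hp]
    apply Finset.sum_congr rfl
    intro i _
    rw [Nat.cast_pow, ← Complex.natCast_cpow_natCast_mul, Complex.cpow_nat_mul]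
  have hpow : ∀ k : ℕ, (p : ℂ) ^ (-(k : ℂ) * s) = x ^ k := by
    intro k
    rw [show -(k : ℂ) * s = (k : ℂ) * (-s) from by ring, Complex.cpow_nat_mul]
  have e2 : (p : ℂ) ^ (I * (T₁ : ℂ) - s) = α * x := by
    rw [show I * (T₁ : ℂ) - s = I * (T₁ : ℂ) + (-s) from by ring, Complex.cpow_add _ _ hp0]
  have e3 : (p : ℂ) ^ (-I * (T₂ : ℂ) - s) = β * x := by
    rw [show -I * (T₂ : ℂ) - s = -I * (T₂ : ℂ) + (-s) from by ring, Complex.cpow_add _ _ hp0]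
  have e4 : (p : ℂ) ^ (I * ((T₁ : ℂ) - (T₂ : ℂ)) - s) = α * β * x := by
    rw [show I * ((T₁ : ℂ) - (T₂ : ℂ)) - s = I * (T₁ : ℂ) + (-I * (T₂ : ℂ) + -s) from by ring,
      Complex.cpow_add _ _ hp0, Complex.cpow_add _ _ hp0, ← mul_assoc]
  have e1 : (p : ℂ) ^ (I * ((T₁ : ℂ) - (T₂ : ℂ)) - 2 * s) = α * β * (x * x) := by
    rw [show I * ((T₁ : ℂ) - (T₂ : ℂ)) - 2 * s
        = I * (T₁ : ℂ) + (-I * (T₂ : ℂ) + (-s + -s)) from by ring,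
      Complex.cpow_add _ _ hp0, Complex.cpow_add _ _ hp0, Complex.cpow_add _ _ hp0, ← mul_assoc]
  calc ∑' k : ℕ, csigma (I * T₁) (p ^ k) * csigma (-I * T₂) (p ^ k) * (p : ℂ) ^ (-(k : ℂ) * s)
      = ∑' k : ℕ, (∑ i ∈ Finset.range (k+1), α ^ i) * (∑ j ∈ Finset.range (k+1), β ^ j) * x ^ k := by
        apply tsum_congr
        intro k
        rw [hsig, hsig, hpow]
    _ = (1 - α * β * (x * x)) / ((1 - x) * (1 - α * x) * (1 - β * x) * (1 - α * β * x)) :=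
        key_identity α β x hα hβ hx
    _ = _ := by rw [e1, e2, e3, e4]
end

section
/- Assume the Riemann hypothesis. Then uniformly for 1 + 1/log log t ≤ σ ≤ 9/8 and t ≥ e^{27}, log ζ(σ+it) = O(log(1/(σ−1))). -/
open Complex Real

private lemma tail_sum_le {σ : ℝ} (hσ : 1 < σ) (N : ℕ) :
    ∑ i ∈ Finset.range N, ((1:ℝ) + (i + 1 : ℕ)) ^ (-σ) ≤ 1 / (σ - 1) := by
  have hanti : AntitoneOn (fun x : ℝ => x ^ (-σ)) (Set.Icc 1 (1 + N)) := by
    intro x hx y hy hxy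
    have hx0 : 0 < x := lt_of_lt_of_le one_pos hx.1
    exact Real.rpow_le_rpow_of_nonpos hx0 hxy (by linarith)
  have h1 := hanti.sum_le_integral
  have h2 : ∫ x in (1:ℝ)..(1 + N), x ^ (-σ) ≤ 1 / (σ - 1) := by
    rw [intervalIntegral.integral_of_le (le_add_of_nonneg_right (Nat.cast_nonneg N))]
    have hint : MeasureTheory.IntegrableOn (fun x : ℝ => x ^ (-σ)) (Set.Ioi 1) :=
      integrableOn_Ioi_rpow_of_lt (by linarith) one_pos
    calc ∫ x in Set.Ioc (1:ℝ) (1 + N), x ^ (-σ) ≤ ∫ x in Set.Ioi (1:ℝ), x ^ (-σ) :=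
          MeasureTheory.setIntegral_mono_set hint
            (MeasureTheory.ae_restrict_of_forall_mem measurableSet_Ioi
              (fun x hx => Real.rpow_nonneg (by linarith [Set.mem_Ioi.mp hx]) _))
            (HasSubset.Subset.eventuallyLE (Set.Ioc_subset_Ioi_self (a := (1 + N : ℝ)) (b := (1:ℝ))))
      _ = 1 / (σ - 1) := by
          rw [integral_Ioi_rpow_of_lt (by linarith) one_pos]
          rw [Real.one_rpow]
          rw [div_eq_div_iff (by linarith) (by linarith)]; ring
  exact le_trans h1 h2

private lemma summable_shift {σ : ℝ} (hσ : 1 < σ) :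
    Summable (fun n : ℕ => 1 / ((n : ℝ) + 1) ^ σ) := by
  have := (Real.summable_one_div_nat_add_rpow 1 σ).mpr hσ
  refine this.congr fun n => ?_
  rw [show |(n:ℝ) + 1| = (n:ℝ) + 1 from abs_of_nonneg (by positivity)]

private lemma tsum_shift_le {σ : ℝ} (hσ : 1 < σ) :
    ∑' n : ℕ, 1 / ((n : ℝ) + 1) ^ σ ≤ 1 + 1 / (σ - 1) := by
  have hsum := summable_shift hσ
  rw [Summable.tsum_eq_zero_add hsum]
  have h0 : 1 / ((0 : ℕ) + 1 : ℝ) ^ σ = 1 := by norm_num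
  rw [h0]
  gcongr 1 + ?_
  refine tsum_le_of_sum_range_le (fun n => by positivity) fun N => ?_
  calc ∑ i ∈ Finset.range N, 1 / ((i + 1 : ℕ) + 1 : ℝ) ^ σ
      = ∑ i ∈ Finset.range N, ((1:ℝ) + (i + 1 : ℕ)) ^ (-σ) := by
        refine Finset.sum_congr rfl fun i _ => ?_
        rw [Real.rpow_neg (by positivity), one_div]
        congr 1
        push_cast; ring
    _ ≤ 1 / (σ - 1) := tail_sum_le hσ N

private lemma norm_zeta_le {s : ℂ} (hs : 1 < s.re) :
    ‖riemannZeta s‖ ≤ 1 + 1 / (s.re - 1) := by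
  have hnorm : ∀ n : ℕ, ‖1 / ((n : ℂ) + 1) ^ s‖ = 1 / ((n : ℝ) + 1) ^ s.re := by
    intro n
    have : ((n : ℂ) + 1) = ((n + 1 : ℕ) : ℂ) := by push_cast; ring
    rw [norm_div, norm_one, this, Complex.norm_natCast_cpow_of_pos (Nat.succ_pos n)]
    push_cast; ring_nf
  have hsum : Summable (fun n : ℕ => ‖1 / ((n : ℂ) + 1) ^ s‖) :=
    (summable_shift hs).congr fun n => (hnorm n).symm
  rw [zeta_eq_tsum_one_div_nat_add_one_cpow hs]
  calc ‖∑' n : ℕ, 1 / ((n : ℂ) + 1) ^ s‖ ≤ ∑' n : ℕ, ‖1 / ((n : ℂ) + 1) ^ s‖ :=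
        norm_tsum_le_tsum_norm hsum
    _ = ∑' n : ℕ, 1 / ((n : ℝ) + 1) ^ s.re := tsum_congr hnorm
    _ ≤ 1 + 1 / (s.re - 1) := tsum_shift_le hs

private lemma norm_zeta_inv_le {s : ℂ} (hs : 1 < s.re) :
    ‖(riemannZeta s)⁻¹‖ ≤ 1 + 1 / (s.re - 1) := by
  have hinv : (riemannZeta s)⁻¹ = LSeries (fun n => ((ArithmeticFunction.moebius n : ℤ) : ℂ)) s := by
    refine inv_eq_of_mul_eq_one_right ?_
    rw [← LSeries_one_eq_riemannZeta hs]
    exact LSeries_one_mul_Lseries_moebius hs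
  rw [hinv]
  have hg : Summable (fun n : ℕ => 1 / (n : ℝ) ^ s.re) :=
    Real.summable_one_div_nat_rpow.mpr hs
  have hterm : ∀ n : ℕ,
      ‖LSeries.term (fun n => ((ArithmeticFunction.moebius n : ℤ) : ℂ)) s n‖
        ≤ 1 / (n : ℝ) ^ s.re := by
    intro n
    rw [LSeries.norm_term_eq]
    rcases eq_or_ne n 0 with rfl | hn
    · simp only [if_pos rfl]
      positivity
    · rw [if_neg hn]
      have h1 : ‖((ArithmeticFunction.moebius n : ℤ) : ℂ)‖ ≤ 1 := by
        rw [Complex.norm_intCast]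
        exact_mod_cast ArithmeticFunction.abs_moebius_le_one
      have hp : (0:ℝ) < (n:ℝ) ^ s.re :=
        Real.rpow_pos_of_pos (by exact_mod_cast Nat.pos_of_ne_zero hn) _
      rw [div_le_div_iff₀ hp hp, one_mul]
      exact mul_le_of_le_one_left hp.le h1
  have hsum : Summable (fun n : ℕ =>
      ‖LSeries.term (fun n => ((ArithmeticFunction.moebius n : ℤ) : ℂ)) s n‖) :=
    hg.of_nonneg_of_le (fun _ => norm_nonneg _) hterm
  calc ‖LSeries (fun n => ((ArithmeticFunction.moebius n : ℤ) : ℂ)) s‖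
      ≤ ∑' n : ℕ, ‖LSeries.term (fun n => ((ArithmeticFunction.moebius n : ℤ) : ℂ)) s n‖ :=
        norm_tsum_le_tsum_norm hsum
    _ ≤ ∑' n : ℕ, 1 / (n : ℝ) ^ s.re := Summable.tsum_le_tsum hterm hsum hg
    _ = 1 / ((0:ℕ) : ℝ) ^ s.re + ∑' n : ℕ, 1 / ((n + 1 : ℕ) : ℝ) ^ s.re := Summable.tsum_eq_zero_add hg
    _ ≤ 1 + 1 / (s.re - 1) := by
        have h0 : 1 / ((0:ℕ) : ℝ) ^ s.re = 0 := by
          rw [Nat.cast_zero, Real.zero_rpow (by linarith), div_zero]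
        rw [h0, zero_add]
        have := tsum_shift_le hs
        refine le_trans (le_of_eq (tsum_congr fun n => ?_)) this
        push_cast; ring_nf

/-- Littlewood's conditional estimate: on RH, uniformly for
`1 + 1/log log t ≤ σ ≤ 9/8` and `t ≥ e²⁷`, `log ζ(σ+it) ≪ log(1/(σ-1))`. -/
theorem littlewood_log_zeta_bound (hRH : RiemannHypothesis) :
    ∃ C : ℝ, 0 < C ∧ ∀ σ t : ℝ,
      1 + 1 / Real.log (Real.log t) ≤ σ → σ ≤ 9 / 8 → Real.exp 27 ≤ t →
      ‖Complex.log (riemannZeta (σ + I * t))‖ ≤ C * Real.log (1 / (σ - 1)) := by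
  refine ⟨3, by norm_num, fun σ t h1 h2 h3 => ?_⟩
  -- basic facts about t and σ
  have ht0 : (0:ℝ) < t := lt_of_lt_of_le (Real.exp_pos 27) h3
  have hlt : (27:ℝ) ≤ Real.log t := (Real.le_log_iff_exp_le ht0).mpr h3
  have hll : 0 < Real.log (Real.log t) := Real.log_pos (by linarith)
  have hσ1 : 1 < σ := by
    have : 0 < 1 / Real.log (Real.log t) := by positivity
    linarith
  have hσ1' : 0 < σ - 1 := by linarith
  have hσ8 : σ - 1 ≤ 1 / 8 := by linarith
  set s : ℂ := (σ : ℂ) + I * t with hs_def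
  have hre : s.re = σ := by simp [hs_def]
  have hres : 1 < s.re := by rw [hre]; exact hσ1
  set B : ℝ := 1 + 1 / (σ - 1) with hB_def
  have hB1 : 1 < B := by
    have : 0 < 1 / (σ - 1) := by positivity
    simp only [hB_def]; linarith
  have hB0 : 0 < B := by linarith
  -- norm bounds on zeta
  have hub : ‖riemannZeta s‖ ≤ B := by
    have := norm_zeta_le hres; rwa [hre] at this
  have hlb : B⁻¹ ≤ ‖riemannZeta s‖ := by
    have h := norm_zeta_inv_le hres
    rw [hre, norm_inv] at h
    have hzpos : 0 < ‖riemannZeta s‖ :=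
      norm_pos_iff.mpr (riemannZeta_ne_zero_of_one_lt_re hres)
    exact (inv_le_comm₀ hzpos hB0).mp h
  have hz : riemannZeta s ≠ 0 := riemannZeta_ne_zero_of_one_lt_re hres
  have hzpos : 0 < ‖riemannZeta s‖ := norm_pos_iff.mpr hz
  -- bound the complex log
  have hlog_abs : |Real.log ‖riemannZeta s‖| ≤ Real.log B := by
    rw [abs_le]
    constructor
    · rw [← Real.log_inv]
      exact Real.log_le_log (by positivity) hlb
    · exact Real.log_le_log hzpos hub
  have harg : ‖Complex.log (riemannZeta s)‖ ≤ |Real.log ‖riemannZeta s‖| + π := by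
    have h4 := Complex.norm_le_abs_re_add_abs_im (Complex.log (riemannZeta s))
    rw [Complex.log_re, Complex.log_im] at h4
    exact le_trans h4 (add_le_add le_rfl (Complex.abs_arg_le_pi _))
  -- arithmetic on logs
  set L : ℝ := Real.log (1 / (σ - 1)) with hL_def
  have hL2 : 2 ≤ L := by
    have h8 : (8:ℝ) ≤ 1 / (σ - 1) := by
      rw [le_div_iff₀ hσ1']; linarith
    have he2 : Real.exp 2 ≤ 8 := by
      have he : Real.exp 2 = Real.exp 1 * Real.exp 1 := by
        rw [← Real.exp_add]; norm_num
      nlinarith [Real.exp_one_lt_d9, Real.exp_pos 1]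
    have : (2:ℝ) ≤ Real.log 8 := (Real.le_log_iff_exp_le (by norm_num)).mpr he2
    calc (2:ℝ) ≤ Real.log 8 := this
      _ ≤ L := Real.log_le_log (by norm_num) h8
  have hBsplit : Real.log B = Real.log σ + L := by
    have hBeq : B = σ * (1 / (σ - 1)) := by
      rw [hB_def]; field_simp; ring
    rw [hBeq, Real.log_mul (by linarith) (by positivity)]
  have hlogσ : Real.log σ ≤ 1 / 8 := by
    calc Real.log σ ≤ σ - 1 := Real.log_le_sub_one_of_pos (by linarith)
      _ ≤ 1 / 8 := hσ8
  have hπ : π ≤ 3.15 := by linarith [Real.pi_lt_d2]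
  calc ‖Complex.log (riemannZeta s)‖ ≤ |Real.log ‖riemannZeta s‖| + π := harg
    _ ≤ Real.log B + π := by linarith
    _ = Real.log σ + L + π := by rw [hBsplit]
    _ ≤ 3 * L := by linarith
end
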